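/- arXiv:1211.4562 — 4 statements merged into one kernel-verified Lean document; each statement's English description precedes it below -/
import Mathlib

section
/- For fixed ℓ ≥ 1 and n > ℓ, the polynomial Q_{n,ℓ}(t) = Σ_{p=0}^{n-ℓ-1} C(n-1, ℓ+p)·C(ℓ-1+p, ℓ-1)·t^p satisfies: Q_{n,ℓ}(t) is the coefficient of x^ℓ y^n in the formal power series (y/(1-y))·(1-(1+t)y)/(1-(1+t+x)y). -/
/-- Power series in two variables `x = X 0`, `y = X 1` with coefficients
in the polynomial ring `ℚ[t]`. -/
noncomputable abbrev PS2 := MvPowerSeries (Fin 2) (Polynomial ℚ)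

noncomputable def xS : PS2 := MvPowerSeries.X 0
noncomputable def yS : PS2 := MvPowerSeries.X 1
/-- the variable `t`, a constant power series -/
noncomputable def tS : PS2 := MvPowerSeries.C Polynomial.X

/-- `Q_{n,ℓ}(t) = Σ_{p=0}^{n-ℓ-1} C(n-1, ℓ+p)·C(ℓ-1+p, ℓ-1)·t^p`. -/
noncomputable def Q (n ℓ : ℕ) : Polynomial ℚ :=
  ∑ p ∈ Finset.range (n - ℓ), (Nat.choose (n - 1) (ℓ + p) * Nat.choose (ℓ - 1 + p) (ℓ - 1) : ℚ) •
      Polynomial.X ^ p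

/-! Put `u = 1 + t`. The inverse `W` of `1 - (u + x) y` has coefficient `C(b, a) u^(b-a)` at
`x^a y^b`, and since `1 - u y = (1 - (u + x) y) + x y`, the equation for `F` gives
`F (1 - y) = y (1 + x y W)`. So the coefficient of `x^(a+1) y^n` in `F` is the partial sum
`Σ_{k < n-1} C(k, a) (1+t)^(k-a)`. Expanding `(1+t)^(k-a)`, the trinomial revision
`C(k, a) C(k-a, p) = C(k, a+p) C(a+p, a)` and the hockey-stick identity turn the coefficient of
`t^p` into `C(n-1, a+1+p) C(a+p, a)`, which is the coefficient of `t^p` in `Q_{n,a+1}`. -/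

section Bicoeff
open MvPowerSeries
variable {R : Type*} [CommSemiring R]

noncomputable def bicoeff (a b : ℕ) : MvPowerSeries (Fin 2) R →ₗ[R] R :=
  coeff (Finsupp.single 0 a + Finsupp.single 1 b)

theorem bicoeff_one (a b : ℕ) :
    bicoeff a b (1 : MvPowerSeries (Fin 2) R) = if a = 0 ∧ b = 0 then 1 else 0 := by
  simp [bicoeff, coeff_one]

theorem bicoeff_C_mul (a b : ℕ) (r : R) (P : MvPowerSeries (Fin 2) R) :
    bicoeff a b (C r * P) = r * bicoeff a b P :=
  coeff_C_mul _ _ _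

theorem bicoeff_X_zero_mul_succ (a b : ℕ) (P : MvPowerSeries (Fin 2) R) :
    bicoeff (a + 1) b (X 0 * P) = bicoeff a b P := by
  have : Finsupp.single (0 : Fin 2) (a + 1) + Finsupp.single 1 b
      = Finsupp.single 0 1 + (Finsupp.single 0 a + Finsupp.single 1 b) := by
    rw [Finsupp.single_add]; abel
  rw [bicoeff, bicoeff, this, X_def, coeff_add_monomial_mul, one_mul]

theorem bicoeff_X_zero_mul_zero (b : ℕ) (P : MvPowerSeries (Fin 2) R) :
    bicoeff 0 b (X 0 * P) = 0 := by
  rw [bicoeff, X_def, coeff_monomial_mul, if_neg]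
  intro h
  simpa using h 0

theorem bicoeff_X_one_mul_succ (a b : ℕ) (P : MvPowerSeries (Fin 2) R) :
    bicoeff a (b + 1) (X 1 * P) = bicoeff a b P := by
  have : Finsupp.single (0 : Fin 2) a + Finsupp.single 1 (b + 1)
      = Finsupp.single 1 1 + (Finsupp.single 0 a + Finsupp.single 1 b) := by
    rw [Finsupp.single_add]; abel
  rw [bicoeff, bicoeff, this, X_def, coeff_add_monomial_mul, one_mul]

theorem bicoeff_X_one_mul_zero (a : ℕ) (P : MvPowerSeries (Fin 2) R) :
    bicoeff a 0 (X 1 * P) = 0 := by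
  rw [bicoeff, X_def, coeff_monomial_mul, if_neg]
  intro h
  simpa using h 1

end Bicoeff

section CommRing
open MvPowerSeries
variable {R : Type*} [CommRing R]

theorem bicoeff_eq_sum_of_mul_one_sub_X_one {P S : MvPowerSeries (Fin 2) R}
    (h : P * (1 - X 1) = S) (a b : ℕ) :
    bicoeff a b P = ∑ k ∈ Finset.range (b + 1), bicoeff a k S := by
  have hrec : P = S + X 1 * P := by linear_combination h
  induction b with
  | zero => rw [hrec, map_add, bicoeff_X_one_mul_zero, add_zero, Finset.sum_range_one]
  | succ b ih =>
    rw [hrec, map_add, bicoeff_X_one_mul_succ, ih, Finset.sum_range_succ _ (b + 1), add_comm]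

theorem bicoeff_eq_choose_mul_pow_of_mul_eq_one {u : R} {W : MvPowerSeries (Fin 2) R}
    (hW : W * (1 - (C u + X 0) * X 1) = 1) (a b : ℕ) :
    bicoeff a b W = b.choose a * u ^ (b - a) := by
  have hrec : W = 1 + X 1 * (C u * W + X 0 * W) := by linear_combination hW
  induction b generalizing a with
  | zero =>
    rw [hrec, map_add, bicoeff_X_one_mul_zero, bicoeff_one]
    cases a <;> simp
  | succ b ih =>
    rw [hrec, map_add, bicoeff_X_one_mul_succ, bicoeff_one, if_neg (by omega), zero_add, map_add,
      bicoeff_C_mul, ih]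
    cases a with
    | zero => simp [bicoeff_X_zero_mul_zero, pow_succ']
    | succ a =>
      rw [bicoeff_X_zero_mul_succ, ih, Nat.choose_succ_succ', Nat.cast_add, add_mul,
        Nat.add_sub_add_right, add_comm]
      congr 1
      rcases Nat.lt_or_ge a b with hab | hab
      · rw [show b - a = b - (a + 1) + 1 by omega, pow_succ']; ring
      · rw [Nat.choose_eq_zero_of_lt (by omega)]; simp

theorem bicoeff_succ_of_mul_eq {u : R} {F : MvPowerSeries (Fin 2) R}
    (hF : F * ((1 - X 1) * (1 - (C u + X 0) * X 1)) = X 1 * (1 - C u * X 1)) (a n : ℕ) :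
    bicoeff (a + 1) n F = ∑ k ∈ Finset.range (n - 1), (k.choose a : R) * u ^ (k - a) := by
  set D : MvPowerSeries (Fin 2) R := 1 - (C u + X 0) * X 1
  set W := invOfUnit D 1
  have hW : W * D = 1 := by rw [mul_comm]; exact mul_invOfUnit _ _ (by simp [D])
  have hS : F * (1 - X 1) = X 1 * (1 + X 1 * (X 0 * W)) := by
    linear_combination (X 1 - F * (1 - X 1)) * hW + W * hF
  rw [bicoeff_eq_sum_of_mul_one_sub_X_one hS]
  cases n with
  | zero => simp [bicoeff_X_one_mul_zero]
  | succ m =>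
    rw [Finset.sum_range_succ', Finset.sum_range_succ']
    simp [bicoeff_X_one_mul_succ, bicoeff_X_one_mul_zero, bicoeff_one,
      bicoeff_X_zero_mul_succ, bicoeff_eq_choose_mul_pow_of_mul_eq_one hW]

end CommRing

theorem Nat.sum_range_choose_eq_choose_succ (N j : ℕ) :
    ∑ k ∈ Finset.range N, k.choose j = N.choose (j + 1) := by
  induction N with
  | zero => simp
  | succ N ih => rw [Finset.sum_range_succ, ih, Nat.choose_succ_succ', add_comm]

theorem Nat.sum_range_choose_mul_choose_sub (N a p : ℕ) :
    ∑ k ∈ Finset.range N, k.choose a * (k - a).choose p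
      = N.choose (a + p + 1) * (a + p).choose a := by
  have trinomial (k : ℕ) :
      k.choose a * (k - a).choose p = k.choose (a + p) * (a + p).choose a := by
    rw [Nat.choose_mul (Nat.le_add_right a p), Nat.add_sub_cancel_left]
  rw [Finset.sum_congr rfl fun k _ => trinomial k, ← Finset.sum_mul,
    Nat.sum_range_choose_eq_choose_succ]

open Polynomial

theorem coeff_Q_succ (n a p : ℕ) :
    (Q n (a + 1)).coeff p = ((n - 1).choose (a + 1 + p) * (a + p).choose a : ℚ) := by
  simp only [Q, Nat.add_sub_cancel, finsetSum_coeff, coeff_smul, coeff_X_pow, smul_eq_mul,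
    mul_ite, mul_one, mul_zero, Finset.sum_ite_eq, Finset.mem_range]
  split_ifs with hp
  · rfl
  · rw [Nat.choose_eq_zero_of_lt (by omega), Nat.cast_zero, zero_mul]

theorem sum_range_choose_mul_one_add_X_pow (n a : ℕ) :
    ∑ k ∈ Finset.range (n - 1), (k.choose a : ℚ[X]) * (1 + X) ^ (k - a) = Q n (a + 1) := by
  ext p
  rw [coeff_Q_succ, finsetSum_coeff, Nat.add_right_comm a 1 p]
  simp only [coeff_natCast_mul, coeff_one_add_X_pow]
  exact_mod_cast Nat.sum_range_choose_mul_choose_sub (n - 1) a p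

theorem stmt1_general (ℓ n : ℕ) (hℓ : 1 ≤ ℓ) (F : PS2)
    (hF : F * ((1 - yS) * (1 - (1 + tS + xS) * yS)) = yS * (1 - (1 + tS) * yS)) :
    MvPowerSeries.coeff
      (Finsupp.single (0 : Fin 2) ℓ + Finsupp.single 1 n) F = Q n ℓ := by
  obtain ⟨a, rfl⟩ : ∃ a, ℓ = a + 1 := ⟨ℓ - 1, by omega⟩
  have hu : (1 : PS2) + tS = MvPowerSeries.C (1 + X) := by simp [tS]
  rw [hu, xS, yS] at hF
  rw [← sum_range_choose_mul_one_add_X_pow]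
  exact bicoeff_succ_of_mul_eq hF a n

/-- for `ℓ ≥ 1` and `n > ℓ`, `Q_{n,ℓ}(t)` is the coefficient of
`x^ℓ y^n` in `(y/(1-y))·(1-(1+t)y)/(1-(1+t+x)y)`.  The series `F` is specified
by clearing the (unit) denominators. -/
theorem stmt1 (ℓ n : ℕ) (hℓ : 1 ≤ ℓ) (hn : ℓ < n) (F : PS2)
    (hF : F * ((1 - yS) * (1 - (1 + tS + xS) * yS)) = yS * (1 - (1 + tS) * yS)) :
    MvPowerSeries.coeff
      (Finsupp.single (0 : Fin 2) ℓ + Finsupp.single 1 n) F = Q n ℓ :=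
  stmt1_general ℓ n hℓ F hF
end

section
/- Let M be a matroid on ground set E with a linear order, and let X be an initial flat of M (i.e., the elements of X precede all other elements in the order). Then every face of the reduced broken circuit complex of the complete principal truncation T_X(M), viewed as a subset of E \ X, is a face of the broken circuit complex of M restricted to E \ X. -/
variable {α : Type*}

def Matroid.IsCircuitF (M : Matroid α) (C : Finset α) : Prop :=
  ↑C ⊆ M.E ∧ ¬ M.Indep ↑C ∧ ∀ D : Finset α, D ⊂ C → M.Indep ↑D

def MLoopless (M : Matroid α) : Prop := ∀ e ∈ M.E, M.Indep {e}

noncomputable def rkOf (M : Matroid α) (S : Set α) : ℕ :=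
  sSup {n | ∃ I : Set α, M.Indep I ∧ I ⊆ S ∧ I.ncard = n}

def ModularFlat (M : Matroid α) (X : Set α) : Prop :=
  M.IsFlat X ∧ ∀ Y : Set α, M.IsFlat Y →
    rkOf M X + rkOf M Y = rkOf M (X ∪ Y) + rkOf M (X ∩ Y)

section Ordered
variable [LinearOrder α]

def Matroid.IsBrokenCircuit (M : Matroid α) (B : Finset α) : Prop :=
  ∃ (C : Finset α) (i : α), M.IsCircuitF C ∧ i ∈ C ∧ (∀ j ∈ C, i ≤ j) ∧ B = C.erase i

def Matroid.BCFace (M : Matroid α) (S : Finset α) : Prop :=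
  ↑S ⊆ M.E ∧ ∀ B : Finset α, M.IsBrokenCircuit B → ¬ B ⊆ S

def InitialFlat (M : Matroid α) (X : Set α) : Prop :=
  M.IsFlat X ∧ ∀ x ∈ X, ∀ e ∈ M.E \ X, x < e

def TruncBrokenCircuit (M : Matroid α) (X : Set α) (B : Finset α) : Prop :=
  (∃ (C : Finset α) (i : α), M.IsCircuitF C ∧ ↑C ⊆ M.E \ X ∧ i ∈ C ∧
      (∀ j ∈ C, i ≤ j) ∧ B = C.erase i)
  ∨ (↑B ⊆ M.E \ X ∧ (M.closure ↑B ∩ X).Nonempty ∧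
      ∀ B' : Finset α, B' ⊂ B → ¬ (M.closure ↑B' ∩ X).Nonempty)

def TruncBC0Face (M : Matroid α) (X : Set α) (S : Finset α) : Prop :=
  ↑S ⊆ M.E \ X ∧ ∀ B : Finset α, TruncBrokenCircuit M X B → ¬ B ⊆ S

end Ordered

namespace Matroid

variable [DecidableEq α] {M : Matroid α} {C : Finset α} {i : α}

lemma IsCircuitF.indep_erase (hC : M.IsCircuitF C) (hi : i ∈ C) : M.Indep ↑(C.erase i) :=
  hC.2.2 _ (Finset.erase_ssubset hi)

lemma IsCircuitF.mem_closure_erase (hC : M.IsCircuitF C) (hi : i ∈ C) :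
    i ∈ M.closure ↑(C.erase i) := by
  have hinsert : insert i (↑(C.erase i) : Set α) = ↑C := by
    rw [← Finset.coe_insert, Finset.insert_erase hi]
  rw [(hC.indep_erase hi).mem_closure_iff, hinsert]
  exact Or.inl ⟨hC.2.1, hC.1⟩

end Matroid

section Ordered
variable [LinearOrder α] {M : Matroid α} {X : Set α} {S : Finset α}

lemma InitialFlat.mem_of_le_of_mem (hX : InitialFlat M X) {x i : α} (hxX : x ∈ X)
    (hi : i ∈ M.E) (hix : i ≤ x) : i ∈ X := by
  by_contra hiX
  exact (hX.2 x hxX i ⟨hi, hiX⟩).not_ge hix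

lemma TruncBC0Face.closure_inter_eq_empty (hS : TruncBC0Face M X S) :
    M.closure ↑S ∩ X = ∅ := by
  by_contra hne
  obtain ⟨B, hBS, hBmin⟩ := exists_minimal_le_of_wellFoundedLT
    (fun B : Finset α => (M.closure ↑B ∩ X).Nonempty) S (Set.nonempty_iff_ne_empty.2 hne)
  have hBtrunc : TruncBrokenCircuit M X B :=
    Or.inr ⟨(Finset.coe_subset.2 hBS).trans hS.1, hBmin.prop,
      fun _ hB'B => hBmin.not_prop_of_lt hB'B⟩
  exact hS.2 B hBtrunc hBS

/-- A broken circuit inside a face `S` cannot come from a circuit meeting `X`: its least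
element would lie in `X` and in the closure of the broken circuit, hence of `S`. -/
lemma TruncBC0Face.bcFace (hX : InitialFlat M X) (hS : TruncBC0Face M X S) : M.BCFace S := by
  refine ⟨fun x hx => (hS.1 hx).1, ?_⟩
  rintro B ⟨C, i, hC, hiC, hmin, rfl⟩ hBS
  by_cases hCX : (↑C ∩ X : Set α).Nonempty
  · obtain ⟨x, hxC, hxX⟩ := hCX
    have hiX : i ∈ X := hX.mem_of_le_of_mem hxX (hC.1 hiC) (hmin x hxC)
    have hiS : i ∈ M.closure ↑S :=
      M.closure_subset_closure (Finset.coe_subset.2 hBS) (hC.mem_closure_erase hiC)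
    exact (hS.closure_inter_eq_empty.subset ⟨hiS, hiX⟩ : i ∈ (∅ : Set α))
  · have hCEX : ↑C ⊆ M.E \ X := fun y hy => ⟨hC.1 hy, fun hyX => hCX ⟨y, hy, hyX⟩⟩
    exact hS.2 _ (Or.inl ⟨C, i, hC, hCEX, hiC, hmin, rfl⟩) hBS

end Ordered

theorem stmt2_general [LinearOrder α] (M : Matroid α) (X : Set α) (hX : InitialFlat M X) :
    ∀ S : Finset α, TruncBC0Face M X S → M.BCFace S ∧ ↑S ⊆ M.E \ X :=
  fun _ hS => ⟨hS.bcFace hX, hS.1⟩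

/-- every face of the reduced broken circuit complex of the
complete principal truncation `T_X(M)` is a face of the broken circuit complex
of `M` restricted to `E \ X`. -/
theorem stmt2 [LinearOrder α] (M : Matroid α) (hfin : M.E.Finite)
    (hll : MLoopless M) (X : Set α) (hX : InitialFlat M X) :
    ∀ S : Finset α, TruncBC0Face M X S → M.BCFace S ∧ ↑S ⊆ M.E \ X :=
  stmt2_general M X hX
end

section
/- (Brylawski's short-circuit criterion) Let M be a matroid on linearly ordered ground set E and X an initial flat. Then X is modular if and only if for every circuit C of M, either C ⊆ X, or C ⊆ E \ X, or the boundary ∂(C \ X) := cl(C \ X) \ (C \ X) is nonempty and its least element lies in X. -/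
variable {α : Type*}

/-!
Forgetting the order, a flat `X` of a finite loopless matroid is modular iff every circuit `C`
meeting both `X` and `E \ X` has `cl(C \ X)` meeting `X`.

If `X` is modular, `S = C \ X` is independent and one of its elements is spanned by `X` and the
others, so `r(X ∪ cl S) < r X + |S|`; modularity applied to `Y = cl S` then forces
`r(X ∩ cl S) > 0`. Conversely, take bases `I ⊆ B_X` and `I ⊆ B_Y` of `X ∩ Y`, `X` and `Y`. A
circuit inside `B_X ∪ (B_Y \ I)` would yield an element of `X ∩ cl(B_Y \ I) ⊆ cl I ∩ cl(B_Y \ I)`,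
which is a loop since `I ∪ (B_Y \ I)` is independent. So `B_X ∪ (B_Y \ I)` is independent, and
counting it gives `r X + r Y ≤ r(X ∪ Y) + r(X ∩ Y)`.

Since `C \ X` avoids `X`, the set `X ∩ cl(C \ X)` is the part of the boundary
`cl(C \ X) \ (C \ X)` inside `X`; as `X` is initial, it is nonempty iff the least element of the
boundary lies in `X`.
-/

open Set Matroid

namespace Matroid

variable {M : Matroid α} {C X Y I BX BY : Set α}

lemma rkOf_eq_toNat_eRk (M : Matroid α) (S : Set α) : rkOf M S = (M.eRk S).toNat := by
  by_cases hS : M.IsRkFinite S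
  · obtain ⟨I, hI, hIfin⟩ := hS.exists_finite_isBasis'
    rw [← hI.encard_eq_eRk, ← ncard_def]
    refine IsGreatest.csSup_eq ⟨⟨I, hI.indep, hI.subset, rfl⟩, ?_⟩
    rintro n ⟨J, hJ, hJS, rfl⟩
    have hJI : J.encard ≤ I.encard := hI.encard_eq_eRk ▸ hJ.encard_le_eRk_of_subset hJS
    simpa only [ncard_def] using ENat.toNat_le_toNat hJI hIfin.encard_lt_top.ne
  · -- `sSup` of an unbounded set of naturals and `ENat.toNat ⊤` are both `0`
    rw [← eRk_ne_top_iff, not_not] at hS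
    rw [hS, ENat.toNat_top]
    refine Nat.sSup_of_not_bddAbove fun ⟨b, hb⟩ => ?_
    obtain ⟨I, hIS, hI, hIcard⟩ := le_eRk_iff.1 (hS.symm ▸ le_top : ((b + 1 : ℕ) : ℕ∞) ≤ M.eRk S)
    have : b + 1 ≤ b := hb ⟨I, hI, hIS, by rw [ncard_def, hIcard, ENat.toNat_natCast]⟩
    omega

lemma modularFlat_iff_eRk [M.RankFinite] : ModularFlat M X ↔
    M.IsFlat X ∧ ∀ Y, M.IsFlat Y → M.eRk X + M.eRk Y = M.eRk (X ∪ Y) + M.eRk (X ∩ Y) := by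
  have hfin (Z : Set α) : M.eRk Z = ((M.eRk Z).toNat : ℕ∞) :=
    (ENat.natCast_toNat (M.isRkFinite_set Z).eRk_lt_top.ne).symm
  simp only [ModularFlat, rkOf_eq_toNat_eRk]
  refine and_congr_right fun _ => forall₂_congr fun Y _ => ?_
  rw [hfin X, hfin Y, hfin (X ∪ Y), hfin (X ∩ Y)]
  norm_cast

lemma isCircuitF_iff {C : Finset α} : M.IsCircuitF C ↔ M.IsCircuit (C : Set α) := by
  rw [isCircuit_iff_forall_ssubset, Dep, IsCircuitF]
  refine ⟨fun ⟨hCE, hdep, hmin⟩ => ⟨⟨hdep, hCE⟩, fun I hI => ?_⟩,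
    fun ⟨⟨hdep, hCE⟩, hmin⟩ => ⟨hCE, hdep, fun D hD => hmin (Finset.coe_ssubset.2 hD)⟩⟩
  have hIfin : I.Finite := C.finite_toSet.subset hI.subset
  simpa using hmin hIfin.toFinset (by rwa [← Finset.coe_ssubset, Finite.coe_toFinset])

lemma forall_isCircuitF_iff [M.Finitary] {P : Set α → Prop} :
    (∀ C : Finset α, M.IsCircuitF C → P C) ↔ ∀ C, M.IsCircuit C → P C := by
  refine ⟨fun h C hC => ?_, fun h C hC => h C (isCircuitF_iff.1 hC)⟩
  simpa using h hC.finite.toFinset (isCircuitF_iff.2 (by simpa using hC))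

lemma _root_.MLoopless.loopless (h : MLoopless M) : M.Loopless :=
  loopless_iff_forall_isNonloop.2 fun e he => indep_singleton.1 (h e he)

lemma IsCircuit.inter_closure_diff_nonempty [M.RankFinite] (hC : M.IsCircuit C)
    (hmod : ∀ Y, M.IsFlat Y → M.eRk X + M.eRk Y = M.eRk (X ∪ Y) + M.eRk (X ∩ Y))
    (hmeet : (C ∩ X).Nonempty) (hnsub : ¬ C ⊆ X) : (X ∩ M.closure (C \ X)).Nonempty := by
  set S := C \ X
  obtain ⟨f, hfS⟩ : S.Nonempty := sdiff_nonempty.2 hnsub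
  have hS : M.Indep S := hC.ssubset_indep (sdiff_ssubset_left_iff.2 hmeet)
  have hf : f ∈ M.closure (X ∪ (S \ {f})) := by
    refine M.closure_subset_closure ?_ (hC.mem_closure_sdiff_singleton_of_mem hfS.1)
    rintro a ⟨haC, haf⟩
    by_cases haX : a ∈ X
    exacts [Or.inl haX, Or.inr ⟨⟨haC, haX⟩, haf⟩]
  have hXS : M.eRk (X ∪ S) = M.eRk (X ∪ (S \ {f})) := by
    have hins : X ∪ S = insert f (X ∪ (S \ {f})) := by
      rw [← union_insert, insert_sdiff_singleton, insert_eq_of_mem hfS]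
    rw [hins, ← eRk_closure_eq, closure_insert_eq_of_mem_closure hf, eRk_closure_eq]
  have hlt : M.eRk (X ∪ M.closure S) < M.eRk X + M.eRk (M.closure S) := calc
    M.eRk (X ∪ M.closure S) = M.eRk (X ∪ (S \ {f})) := by rw [eRk_union_closure_right_eq, hXS]
    _ ≤ M.eRk X + (S \ {f}).encard := M.eRk_union_le_eRk_add_encard _ _
    _ < M.eRk X + S.encard := WithTop.add_lt_add_left (M.isRkFinite_set X).eRk_lt_top.ne
        (hS.finite.subset sdiff_subset |>.encard_lt_encard (sdiff_singleton_ssubset.2 hfS))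
    _ = M.eRk X + M.eRk (M.closure S) := by rw [eRk_closure_eq, hS.eRk_eq_encard]
  rw [nonempty_iff_ne_empty]
  intro hempty
  rw [hmod _ (M.isFlat_closure S), hempty, eRk_empty, add_zero] at hlt
  exact hlt.false

lemma IsBasis.disjoint_sdiff_of_subset (hI : M.IsBasis I (X ∩ Y)) (hBY : M.IsBasis BY Y)
    (hIBY : I ⊆ BY) : Disjoint (BY \ I) X :=
  disjoint_left.2 fun _ ⟨hjBY, hjI⟩ hjX =>
    hjI <| hI.mem_of_insert_indep ⟨hjX, hBY.subset hjBY⟩ <|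
      hBY.indep.subset (insert_subset hjBY hIBY)

lemma indep_union_sdiff_of_forall_isCircuit [M.Loopless] (hBX : M.IsBasis BX X)
    (hI : M.IsBasis I (X ∩ Y)) (hBY : M.IsBasis BY Y) (hIBY : I ⊆ BY) (hY : M.IsFlat Y)
    (h : ∀ C, M.IsCircuit C → C ⊆ X ∨ C ⊆ M.E \ X ∨ (X ∩ M.closure (C \ X)).Nonempty) :
    M.Indep (BX ∪ (BY \ I)) := by
  have hJX := hI.disjoint_sdiff_of_subset hBY hIBY
  by_contra hdep
  obtain ⟨C, hCsub, hC⟩ := (M.dep_of_not_indep hdep <| union_subset hBX.indep.subset_ground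
    (sdiff_subset.trans hBY.indep.subset_ground)).exists_isCircuit_subset
  have hCX : ¬ C ⊆ X := fun hCX => hC.not_indep <| hBX.indep.subset fun c hc =>
    (hCsub hc).resolve_right fun hcJ => hJX.notMem_of_mem_left hcJ (hCX hc)
  have hCEX : ¬ C ⊆ M.E \ X := fun hCEX => hC.not_indep <| hBY.indep.subset fun c hc =>
    ((hCsub hc).resolve_left fun hcBX => (hCEX hc).2 (hBX.subset hcBX)).1
  obtain ⟨m, hmX, hmC⟩ := ((h C hC).resolve_left hCX).resolve_left hCEX
  have hCXJ : C \ X ⊆ BY \ I := fun c ⟨hcC, hcX⟩ =>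
    (hCsub hcC).resolve_left fun hcBX => hcX (hBX.subset hcBX)
  have hmJ : m ∈ M.closure (BY \ I) := M.closure_subset_closure hCXJ hmC
  have hmY : m ∈ Y := by
    rw [← hY.closure, ← hBY.closure_eq_closure]
    exact M.closure_subset_closure sdiff_subset hmJ
  have hmI : m ∈ M.closure (I ∩ (BY \ I)) := by
    rw [Indep.closure_inter_eq_inter_closure (by rw [union_sdiff_cancel hIBY]; exact hBY.indep)]
    exact ⟨hI.subset_closure ⟨hmX, hmY⟩, hmJ⟩
  simp [closure_empty, loops_eq_empty] at hmI

lemma eRk_add_eRk_eq_of_forall_isCircuit [M.Loopless] (hXE : X ⊆ M.E) (hY : M.IsFlat Y)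
    (h : ∀ C, M.IsCircuit C → C ⊆ X ∨ C ⊆ M.E \ X ∨ (X ∩ M.closure (C \ X)).Nonempty) :
    M.eRk X + M.eRk Y = M.eRk (X ∪ Y) + M.eRk (X ∩ Y) := by
  obtain ⟨I, hI⟩ := M.exists_isBasis (X ∩ Y) (inter_subset_left.trans hXE)
  obtain ⟨BX, hBX, -⟩ := hI.indep.subset_isBasis_of_subset (hI.subset.trans inter_subset_left)
  obtain ⟨BY, hBY, hIBY⟩ := hI.indep.subset_isBasis_of_subset
    (hI.subset.trans inter_subset_right) hY.subset_ground
  have hdisj : Disjoint BX (BY \ I) :=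
    (hI.disjoint_sdiff_of_subset hBY hIBY).symm.mono_left hBX.subset
  refine le_antisymm ?_ (add_comm (M.eRk (X ∩ Y)) _ ▸ M.eRk_inter_add_eRk_union_le X Y)
  have hBYcard : BY.encard = (BY \ I).encard + I.encard := by
    rw [← encard_union_eq disjoint_sdiff_left, sdiff_union_of_subset hIBY]
  calc M.eRk X + M.eRk Y = (BX ∪ (BY \ I)).encard + I.encard := by
        rw [hBX.eRk_eq_encard, hBY.eRk_eq_encard, hBYcard, encard_union_eq hdisj, add_assoc]
    _ ≤ M.eRk (X ∪ Y) + M.eRk (X ∩ Y) := by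
        rw [hI.eRk_eq_encard]
        refine add_le_add_left (Indep.encard_le_eRk_of_subset ?_ ?_) _
        · exact indep_union_sdiff_of_forall_isCircuit hBX hI hBY hIBY hY h
        · exact union_subset_union hBX.subset (sdiff_subset.trans hBY.subset)

lemma modular_iff_forall_isCircuit [M.RankFinite] [M.Loopless] (hXE : X ⊆ M.E) :
    (∀ Y, M.IsFlat Y → M.eRk X + M.eRk Y = M.eRk (X ∪ Y) + M.eRk (X ∩ Y)) ↔
      ∀ C, M.IsCircuit C → C ⊆ X ∨ C ⊆ M.E \ X ∨ (X ∩ M.closure (C \ X)).Nonempty := by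
  refine ⟨fun hmod C hC => ?_, fun h Y hY => eRk_add_eRk_eq_of_forall_isCircuit hXE hY h⟩
  by_cases hCX : C ⊆ X
  · exact .inl hCX
  by_cases hCEX : C ⊆ M.E \ X
  · exact .inr (.inl hCEX)
  obtain ⟨c, hcC, hc⟩ := not_subset.1 hCEX
  exact .inr <| .inr <| hC.inter_closure_diff_nonempty hmod
    ⟨c, hcC, by_contra fun hcX => hc ⟨hC.subset_ground hcC, hcX⟩⟩ hCX

end Matroid

lemma exists_least_mem_iff_inter_nonempty [LinearOrder α] {E X T : Set α}
    (hX : ∀ x ∈ X, ∀ e ∈ E \ X, x < e) (hT : T.Finite) (hTE : T ⊆ E) :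
    (∃ m ∈ T, (∀ y ∈ T, m ≤ y) ∧ m ∈ X) ↔ (T ∩ X).Nonempty := by
  refine ⟨fun ⟨m, hmT, _, hmX⟩ => ⟨m, hmT, hmX⟩, fun ⟨x, hxT, hxX⟩ => ?_⟩
  obtain ⟨m, hmT, hm⟩ := T.exists_min_image id hT ⟨x, hxT⟩
  refine ⟨m, hmT, hm, by_contra fun hmX => ?_⟩
  exact (hm x hxT).not_gt (hX x hxX m ⟨hTE hmT, hmX⟩)

/-- Brylawski's short-circuit criterion: an initial flat `X` is
modular iff for every circuit `C`, either `C ⊆ X`, or `C ⊆ E \ X`, or the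
boundary `∂(C \ X) = cl(C \ X) \ (C \ X)` is nonempty and its least element
lies in `X`. -/
theorem stmt5 [LinearOrder α] (M : Matroid α) (hfin : M.E.Finite)
    (hll : MLoopless M) (X : Set α) (hX : InitialFlat M X) :
    ModularFlat M X ↔
      ∀ C : Finset α, M.IsCircuitF C →
        ↑C ⊆ X ∨ ↑C ⊆ M.E \ X ∨
        (∃ m ∈ M.closure (↑C \ X) \ (↑C \ X),
          (∀ y ∈ M.closure (↑C \ X) \ (↑C \ X), m ≤ y) ∧ m ∈ X) := by
  have : M.Finite := ⟨hfin⟩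
  have : M.Loopless := hll.loopless
  rw [modularFlat_iff_eRk, and_iff_right hX.1, modular_iff_forall_isCircuit hX.1.subset_ground,
    ← forall_isCircuitF_iff]
  refine forall₂_congr fun C _ => or_congr_right <| or_congr_right ?_
  have hboundary : (M.closure (C \ X) \ (C \ X)) ∩ X = X ∩ M.closure (C \ X) := by
    ext x
    simp only [mem_inter_iff, mem_sdiff]
    tauto
  rw [exists_least_mem_iff_inter_nonempty hX.2 (hfin.subset ?_) ?_, hboundary] <;>
    exact sdiff_subset.trans (M.closure_subset_ground _)
end

section
/- Let G be a connected 3-hypergraph (every edge has exactly 3 vertices) with vertex set of size n and edge set of size m, such that every pair of distinct edges shares at most one vertex and each 1-simplex (pair of vertices inside an edge) lies in exactly one edge. If the geometric realization of the 2-dimensional simplicial complex with 2-simplices the edges of G has first Betti number 0 and is connected, then G is a hypertree (has no cycles), and n = 2m + 1. -/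
variable {V : Type*} [Fintype V] [LinearOrder V]

/-- The 1-simplices of the complex `|G|`: pairs of vertices contained in a
hyperedge. -/
def pairsIn (E : Finset (Finset V)) : Finset (Finset V) :=
  E.biUnion fun e => e.powersetCard 2

/-- The simplicial boundary matrix `∂₂` of the 2-complex `|G|` over `ℚ`
(vertices ordered by the linear order on `V`): for a 2-face `e` and a 1-face
`p ⊆ e` with omitted vertex `x`, the entry is `(-1)^{#{y ∈ e : y < x}}`. -/
noncomputable def bdry2 (E : Finset (Finset V)) :
    Matrix {p : Finset V // p ∈ pairsIn E} {e : Finset V // e ∈ E} ℚ :=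
  fun p e => if (p : Finset V) ⊆ e then
    ∑ x ∈ (e : Finset V) \ (p : Finset V), (-1 : ℚ) ^ ((e : Finset V).filter (· < x)).card
  else 0

/-- The simplicial boundary matrix `∂₁`: for a 1-face `p = {a < b}`,
`∂₁ p = b - a`. -/
noncomputable def bdry1 (E : Finset (Finset V)) :
    Matrix V {p : Finset V // p ∈ pairsIn E} ℚ :=
  fun v p => if v ∈ (p : Finset V) then
    (-1 : ℚ) ^ (1 + ((p : Finset V).filter (· < v)).card)
  else 0

/-- The first Betti number of `|G|` over `ℚ`:
`dim (ker ∂₁ / (im ∂₂ ∩ ker ∂₁))`. -/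
noncomputable def betti1 (E : Finset (Finset V)) : ℕ :=
  Module.finrank ℚ
    (LinearMap.ker (bdry1 E).mulVecLin ⧸
      ((LinearMap.range (bdry2 E).mulVecLin ⊓ LinearMap.ker (bdry1 E).mulVecLin).comap
        (LinearMap.ker (bdry1 E).mulVecLin).subtype))

/-- A cycle in a hypergraph: an alternating closed walk `v₀ e₁ v₁ ⋯ e_k v_k`
with `v₀ = v_k`, at least two edges, and otherwise distinct edges and
vertices. -/
def HasCycle (E : Finset (Finset V)) : Prop :=
  ∃ k : ℕ, 2 ≤ k ∧ ∃ (v : Fin (k+1) → V) (e : Fin k → Finset V),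
    (∀ i, e i ∈ E) ∧
    (∀ i : Fin k, v i.castSucc ∈ e i ∧ v i.succ ∈ e i) ∧
    v 0 = v (Fin.last k) ∧
    Function.Injective e ∧
    (∀ i j : Fin k, v i.castSucc = v j.castSucc → i = j)

/-- The hypergraph is connected: every two vertices are joined by a walk. -/
def HGConnected (E : Finset (Finset V)) : Prop :=
  ∀ u v : V, Relation.ReflTransGen (fun a b => ∃ e ∈ E, a ∈ e ∧ b ∈ e) u v

/-!
Let `W = E.sup edgeSpan ⊆ ℚ^V`, spanned by the differences `δ u - δ w` of vertices lying in a
common edge. Connectivity makes `W` together with a single `δ v₀` span `ℚ^V`, while each edge contributes at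
most two dimensions, so `n - 1 ≤ dim W ≤ 2m`; along a cycle the difference across the first edge
already lies in the span of the other edges, which makes the second inequality strict.
In the other direction, distinct edges share no pair, so `C₁` has dimension `3m`;
`b₁ = 0` puts `ker ∂₁` inside `im ∂₂`, of dimension at most `m`, and `im ∂₁` lies in the
hyperplane of sum-zero vectors, so rank–nullity gives `3m ≤ (n - 1) + m`.
-/

open Module Submodule

section LinearAlgebra

variable {K M ι : Type*} [DivisionRing K] [AddCommGroup M] [Module K M] [FiniteDimensional K M]

theorem Submodule.finrank_finset_sup_le_sum (s : Finset ι) (p : ι → Submodule K M) :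
    finrank K ↥(s.sup p) ≤ ∑ i ∈ s, finrank K (p i) := by
  classical
  induction s using Finset.induction_on with
  | empty => simp
  | insert i s hi ih =>
    rw [Finset.sup_insert, Finset.sum_insert hi]
    exact (finrank_add_le_finrank_add_finrank _ _).trans (Nat.add_le_add_left ih _)

theorem Submodule.finrank_sup_lt_of_inf_ne_bot {p q : Submodule K M} (h : p ⊓ q ≠ ⊥) :
    finrank K ↥(p ⊔ q) < finrank K p + finrank K q := by
  have : finrank K ↥(p ⊓ q) ≠ 0 := fun h0 => h (Submodule.finrank_eq_zero.mp h0)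
  have := finrank_sup_add_finrank_inf_eq p q
  omega

end LinearAlgebra

section EdgeSpan

variable {α : Type*} [DecidableEq α]

def edgeSpan (e : Finset α) : Submodule ℚ (α → ℚ) :=
  vectorSpan ℚ ((fun v => (Pi.single v 1 : α → ℚ)) '' (e : Set α))

theorem single_sub_single_mem_edgeSpan {e : Finset α} {u v : α} (hu : u ∈ e) (hv : v ∈ e) :
    (Pi.single u 1 - Pi.single v 1 : α → ℚ) ∈ edgeSpan e :=
  vsub_mem_vectorSpan (P := α → ℚ) ℚ (Set.mem_image_of_mem _ hu) (Set.mem_image_of_mem _ hv)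

theorem finrank_edgeSpan_le {e : Finset α} {n : ℕ} (he : e.card = n + 1) :
    finrank ℚ (edgeSpan e) ≤ n := by
  classical
  rw [edgeSpan, ← Finset.coe_image]
  exact finrank_vectorSpan_image_finset_le ℚ (fun v => (Pi.single v 1 : α → ℚ)) e he

theorem finrank_sup_edgeSpan_le [Fintype α] {F : Finset (Finset α)} {n : ℕ}
    (hF : ∀ e ∈ F, e.card = n + 1) :
    finrank ℚ ↥(F.sup edgeSpan) ≤ n * F.card :=
  calc finrank ℚ ↥(F.sup edgeSpan) ≤ ∑ e ∈ F, finrank ℚ (edgeSpan e) :=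
        finrank_finset_sup_le_sum F edgeSpan
    _ ≤ ∑ _e ∈ F, n := Finset.sum_le_sum fun e he => finrank_edgeSpan_le (hF e he)
    _ = n * F.card := by rw [Finset.sum_const, smul_eq_mul, mul_comm]

theorem single_sub_single_mem_sup_edgeSpan {F : Finset (Finset α)} {u v : α}
    (h : Relation.ReflTransGen (fun a b => ∃ e ∈ F, a ∈ e ∧ b ∈ e) u v) :
    (Pi.single v 1 - Pi.single u 1 : α → ℚ) ∈ F.sup edgeSpan := by
  induction h with
  | refl => simp
  | tail _ hbc ih =>
    obtain ⟨e, he, hb, hc⟩ := hbc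
    simpa using add_mem (Finset.le_sup (f := edgeSpan) he (single_sub_single_mem_edgeSpan hc hb)) ih

theorem card_le_finrank_sup_edgeSpan_add_one [Fintype α] [Nonempty α] {E : Finset (Finset α)}
    (hconn : HGConnected E) :
    Fintype.card α ≤ finrank ℚ ↥(E.sup edgeSpan) + 1 := by
  classical
  obtain ⟨v₀⟩ := ‹Nonempty α›
  have htop : E.sup edgeSpan ⊔ span ℚ {(Pi.single v₀ 1 : α → ℚ)} = ⊤ := by
    rw [eq_top_iff, ← (Pi.basisFun ℚ α).span_eq, span_le]
    rintro _ ⟨v, rfl⟩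
    rw [Pi.basisFun_apply, ← sub_add_cancel (Pi.single v 1) (Pi.single v₀ 1)]
    exact add_mem (mem_sup_left (single_sub_single_mem_sup_edgeSpan (hconn v₀ v)))
      (mem_sup_right (mem_span_singleton_self _))
  calc Fintype.card α = finrank ℚ ↥(E.sup edgeSpan ⊔ span ℚ {(Pi.single v₀ 1 : α → ℚ)}) := by
        rw [htop, finrank_top, finrank_fintype_fun_eq_card]
    _ ≤ finrank ℚ ↥(E.sup edgeSpan) + finrank ℚ (span ℚ {(Pi.single v₀ 1 : α → ℚ)}) :=
        finrank_add_le_finrank_add_finrank _ _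
    _ ≤ finrank ℚ ↥(E.sup edgeSpan) + 1 := by
        gcongr
        simpa using finrank_span_le_card ({Pi.single v₀ 1} : Set (α → ℚ))

theorem HasCycle.exists_reflTransGen_erase {E : Finset (Finset α)} (h : HasCycle E) :
    ∃ e ∈ E, ∃ u ∈ e, ∃ w ∈ e, u ≠ w ∧
      Relation.ReflTransGen (fun a b => ∃ e' ∈ E.erase e, a ∈ e' ∧ b ∈ e') u w := by
  obtain ⟨k, hk, v, e, heE, hve, hclose, einj, vinj⟩ := h
  obtain ⟨k, rfl⟩ : ∃ k', k = k' + 2 := ⟨k - 2, by omega⟩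
  have hne : v 1 ≠ v 0 := fun h =>
    one_ne_zero (vinj 1 0 (by rwa [Fin.castSucc_one, Fin.castSucc_zero]))
  have hpath : ∀ i : Fin (k + 2), Relation.ReflTransGen
      (fun a b => ∃ e' ∈ E.erase (e 0), a ∈ e' ∧ b ∈ e') (v 1) (v i.succ) := by
    intro i
    induction i using Fin.induction with
    | zero => rw [Fin.succ_zero_eq_one]
    | succ i ih =>
      refine ih.tail ⟨e i.succ, Finset.mem_erase.mpr ⟨fun h => i.succ_ne_zero (einj h), heE _⟩,
        ?_, (hve _).2⟩
      rw [Fin.succ_castSucc]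
      exact (hve _).1
  refine ⟨e 0, heE 0, v 1, ?_, v 0, ?_, hne, ?_⟩
  · simpa using (hve 0).2
  · simpa using (hve 0).1
  · simpa [Fin.succ_last, ← hclose] using hpath (Fin.last (k + 1))

theorem finrank_sup_edgeSpan_lt_of_hasCycle [Fintype α] {E : Finset (Finset α)} {n : ℕ}
    (hE : ∀ e ∈ E, e.card = n + 1) (hcyc : HasCycle E) :
    finrank ℚ ↥(E.sup edgeSpan) < n * E.card := by
  obtain ⟨e, he, u, hu, w, hw, huw, hpath⟩ := hcyc.exists_reflTransGen_erase
  have hinf : edgeSpan e ⊓ (E.erase e).sup edgeSpan ≠ ⊥ := by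
    refine (Submodule.ne_bot_iff _).mpr ⟨_, mem_inf.mpr ⟨single_sub_single_mem_edgeSpan hw hu,
      single_sub_single_mem_sup_edgeSpan hpath⟩, sub_ne_zero.mpr fun h => huw ?_⟩
    simpa [Pi.single_apply, eq_comm] using congrFun h u
  have hsplit : E.sup edgeSpan = edgeSpan e ⊔ (E.erase e).sup edgeSpan := by
    rw [← Finset.sup_insert, Finset.insert_erase he]
  have hm : 1 ≤ E.card := Finset.card_pos.mpr ⟨e, he⟩
  calc finrank ℚ ↥(E.sup edgeSpan)
      < finrank ℚ (edgeSpan e) + finrank ℚ ↥((E.erase e).sup edgeSpan) :=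
        hsplit ▸ finrank_sup_lt_of_inf_ne_bot hinf
    _ ≤ n + n * (E.erase e).card :=
        add_le_add (finrank_edgeSpan_le (hE e he))
          (finrank_sup_edgeSpan_le fun e' he' => hE e' (Finset.mem_of_mem_erase he'))
    _ = n * E.card := by
        rw [Finset.card_erase_of_mem he, add_comm, ← Nat.mul_add_one, Nat.sub_add_cancel hm]

end EdgeSpan

section Boundary

variable {α : Type*} [LinearOrder α]

theorem card_pairsIn {E : Finset (Finset α)} (h3 : ∀ e ∈ E, e.card = 3)
    (hunique : ∀ u v : α, u ≠ v → ∀ e ∈ E, u ∈ e → v ∈ e →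
      ∀ e' ∈ E, u ∈ e' → v ∈ e' → e = e') :
    (pairsIn E).card = 3 * E.card := by
  rw [pairsIn, Finset.card_biUnion]
  · rw [Finset.sum_congr rfl fun e he => by rw [Finset.card_powersetCard, h3 e he],
      Finset.sum_const, smul_eq_mul, mul_comm]
    rfl
  · intro e he e' he' hne
    refine Finset.disjoint_left.mpr fun p hp hp' => ?_
    rw [Finset.mem_powersetCard] at hp hp'
    obtain ⟨u, w, huw, rfl⟩ := Finset.card_eq_two.mp hp.2
    exact hne (hunique u w huw e he (hp.1 (by simp)) (hp.1 (by simp))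
      e' he' (hp'.1 (by simp)) (hp'.1 (by simp)))

theorem exists_lt_eq_pair_of_mem_pairsIn {E : Finset (Finset α)} {p : Finset α}
    (hp : p ∈ pairsIn E) : ∃ a b, a < b ∧ p = {a, b} := by
  obtain ⟨e, -, hp⟩ := Finset.mem_biUnion.mp hp
  obtain ⟨a, b, hab, rfl⟩ := Finset.card_eq_two.mp (Finset.mem_powersetCard.mp hp).2
  rcases hab.lt_or_gt with h | h
  · exact ⟨a, b, h, rfl⟩
  · exact ⟨b, a, h, Finset.pair_comm a b⟩

open Matrix in
theorem one_vecMul_bdry1 [Fintype α] (E : Finset (Finset α)) : (1 : α → ℚ) ᵥ* bdry1 E = 0 := by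
  ext ⟨p, hp⟩
  obtain ⟨a, b, hab, rfl⟩ := exists_lt_eq_pair_of_mem_pairsIn hp
  simp only [vecMul, dotProduct, bdry1, Pi.one_apply, one_mul, Pi.zero_apply]
  rw [Finset.sum_ite_mem, Finset.univ_inter, Finset.sum_pair hab.ne]
  simp [Finset.filter_insert, Finset.filter_singleton, hab, not_lt.mpr hab.le, pow_succ]

open Matrix in
theorem finrank_range_bdry1_lt [Fintype α] [Nonempty α] (E : Finset (Finset α)) :
    finrank ℚ (LinearMap.range (bdry1 E).mulVecLin) < Fintype.card α := by
  rw [← finrank_fintype_fun_eq_card ℚ]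
  refine Submodule.finrank_lt fun htop => ?_
  obtain ⟨v₀⟩ := ‹Nonempty α›
  obtain ⟨x, hx⟩ : Pi.single v₀ 1 ∈ LinearMap.range (bdry1 E).mulVecLin := htop ▸ mem_top
  have h := congrArg ((1 : α → ℚ) ⬝ᵥ ·) hx
  simp [dotProduct_mulVec, one_vecMul_bdry1] at h

theorem finrank_ker_bdry1_le_of_betti1_eq_zero {E : Finset (Finset α)} (hb1 : betti1 E = 0) :
    finrank ℚ (LinearMap.ker (bdry1 E).mulVecLin) ≤ E.card := by
  set K := LinearMap.ker (bdry1 E).mulVecLin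
  set R := LinearMap.range (bdry2 E).mulVecLin
  calc finrank ℚ K
      = finrank ℚ (K ⧸ (R ⊓ K).comap K.subtype) + finrank ℚ ↥((R ⊓ K).comap K.subtype) :=
        (finrank_quotient_add_finrank _).symm
    _ = finrank ℚ ↥((R ⊓ K).comap K.subtype) := by rw [show finrank ℚ (K ⧸ _) = 0 from hb1, zero_add]
    _ = finrank ℚ ↥(R ⊓ K) := (comapSubtypeEquivOfLe inf_le_right).finrank_eq
    _ ≤ finrank ℚ R := finrank_mono inf_le_left
    _ ≤ E.card := by simpa using LinearMap.finrank_range_le (bdry2 E).mulVecLin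

theorem two_mul_card_add_one_le_card [Fintype α] [Nonempty α] {E : Finset (Finset α)}
    (h3 : ∀ e ∈ E, e.card = 3)
    (hunique : ∀ u v : α, u ≠ v → ∀ e ∈ E, u ∈ e → v ∈ e →
      ∀ e' ∈ E, u ∈ e' → v ∈ e' → e = e')
    (hb1 : betti1 E = 0) :
    2 * E.card + 1 ≤ Fintype.card α := by
  have hrank := LinearMap.finrank_range_add_finrank_ker (bdry1 E).mulVecLin
  rw [finrank_fintype_fun_eq_card, Fintype.card_coe, card_pairsIn h3 hunique] at hrank
  have := finrank_range_bdry1_lt E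
  have := finrank_ker_bdry1_le_of_betti1_eq_zero hb1
  omega

end Boundary

theorem stmt16_general [Nonempty V] (E : Finset (Finset V))
    (h3 : ∀ e ∈ E, e.card = 3)
    (hunique : ∀ u v : V, u ≠ v → ∀ e ∈ E, u ∈ e → v ∈ e →
      ∀ e' ∈ E, u ∈ e' → v ∈ e' → e = e')
    (hconn : HGConnected E)
    (hb1 : betti1 E = 0) :
    ¬ HasCycle E ∧ Fintype.card V = 2 * E.card + 1 := by
  have hlow := two_mul_card_add_one_le_card h3 hunique hb1
  have hup := card_le_finrank_sup_edgeSpan_add_one hconn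
  refine ⟨fun hcyc => ?_, ?_⟩
  · have := finrank_sup_edgeSpan_lt_of_hasCycle (n := 2) h3 hcyc
    omega
  · have := finrank_sup_edgeSpan_le (n := 2) h3
    omega

/-- let `G` be a connected 3-hypergraph (each edge has exactly 3
vertices) in which two distinct edges share at most one vertex and each pair of
vertices lying in an edge lies in exactly one edge.  If the geometric
realization of the associated 2-dimensional complex is connected with first
Betti number 0, then `G` is a hypertree and `#V = 2·#E + 1`. -/
theorem stmt16 [Nonempty V] (E : Finset (Finset V))
    (h3 : ∀ e ∈ E, e.card = 3)
    (hshare : ∀ e ∈ E, ∀ e' ∈ E, e ≠ e' → (e ∩ e').card ≤ 1)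
    (hunique : ∀ u v : V, u ≠ v → ∀ e ∈ E, u ∈ e → v ∈ e →
      ∀ e' ∈ E, u ∈ e' → v ∈ e' → e = e')
    (hconn : HGConnected E)
    (hb1 : betti1 E = 0) :
    ¬ HasCycle E ∧ Fintype.card V = 2 * E.card + 1 :=
  stmt16_general E h3 hunique hconn hb1
end
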